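/- Let k be a field of characteristic zero, B an integral k-domain, and D a locally nilpotent derivation of B with kernel A. Then A is factorially closed in B: for nonzero f, g ∈ B, if fg ∈ A then f ∈ A and g ∈ A. -/

import Mathlib

/-!
For `b ≠ 0` let `deg b` be the largest `m` with `D^[m] b ≠ 0` (it exists by local nilpotency).
If `m = deg f` and `n = deg g`, the Leibniz rule collapses to
`D^[m + n] (f * g) = (m + n).choose m • (D^[m] f * D^[n] g)`, which is nonzero in a domain of
characteristic zero. Hence `deg (f * g) = deg f + deg g`, and `D (f * g) = 0` forces
`deg f = deg g = 0`.
-/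

open Finset

theorem Function.exists_iterate_ne_and_iterate_succ_eq {α : Type*} {φ : α → α} {x a : α}
    (hx : x ≠ a) {N : ℕ} (hN : φ^[N] x = a) : ∃ m, φ^[m] x ≠ a ∧ φ^[m + 1] x = a := by
  induction N with
  | zero => exact absurd hN hx
  | succ N ih =>
    by_cases h : φ^[N] x = a
    · exact ih h
    · exact ⟨N, h, hN⟩

namespace Derivation

variable {R A : Type*} [CommSemiring R] [CommSemiring A] [Algebra R A] (D : Derivation R A A)

theorem iterate_mul (a b : A) (n : ℕ) :
    (⇑D)^[n] (a * b) =
      ∑ ij ∈ antidiagonal n, n.choose ij.1 • ((⇑D)^[ij.1] a * (⇑D)^[ij.2] b) := by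
  induction n with
  | zero => simp
  | succ n ih =>
    rw [Function.iterate_succ_apply', ih, map_sum, sum_antidiagonal_choose_succ_nsmul
      (fun i j => (⇑D)^[i] a * (⇑D)^[j] b), add_comm, ← sum_add_distrib]
    refine sum_congr rfl fun ij hij => ?_
    rw [Nat.choose_symm_of_eq_add (mem_antidiagonal.mp hij).symm, ← smul_add, map_nsmul,
      leibniz, smul_eq_mul, smul_eq_mul, Function.iterate_succ_apply',
      Function.iterate_succ_apply']
    ring_nf

theorem iterate_eq_zero_of_le {a : A} {m n : ℕ} (ha : (⇑D)^[m] a = 0) (hmn : m ≤ n) :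
    (⇑D)^[n] a = 0 := by
  obtain ⟨k, rfl⟩ := Nat.exists_eq_add_of_le hmn
  rw [add_comm, Function.iterate_add_apply, ha, iterate_map_zero]

theorem iterate_add_mul_eq_choose_smul {a b : A} {m n : ℕ} (ha : (⇑D)^[m + 1] a = 0)
    (hb : (⇑D)^[n + 1] b = 0) :
    (⇑D)^[m + n] (a * b) = (m + n).choose m • ((⇑D)^[m] a * (⇑D)^[n] b) := by
  rw [iterate_mul, sum_eq_single_of_mem (m, n) (mem_antidiagonal.mpr rfl)]
  rintro ⟨i, j⟩ hij hne
  simp only [HasAntidiagonal.mem_antidiagonal] at hij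
  rcases lt_or_ge m i with hi | hi
  · rw [D.iterate_eq_zero_of_le ha hi, zero_mul, smul_zero]
  · have hj : n + 1 ≤ j := by
      by_contra! hj
      exact hne (Prod.ext (by omega) (by omega))
    rw [D.iterate_eq_zero_of_le hb hj, mul_zero, smul_zero]

theorem iterate_add_mul_ne_zero [IsDomain A] [CharZero A] {a b : A} {m n : ℕ}
    (ha : (⇑D)^[m] a ≠ 0) (ha' : (⇑D)^[m + 1] a = 0)
    (hb : (⇑D)^[n] b ≠ 0) (hb' : (⇑D)^[n + 1] b = 0) :
    (⇑D)^[m + n] (a * b) ≠ 0 := by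
  rw [D.iterate_add_mul_eq_choose_smul ha' hb']
  exact smul_ne_zero (Nat.choose_pos (Nat.le_add_right m n)).ne' (mul_ne_zero ha hb)

end Derivation

/-- Let `k` be a field of characteristic zero, `B` an integral `k`-domain, and `D` a
locally nilpotent derivation of `B` with kernel `A = {b | D b = 0}`.  Then `A` is
factorially closed in `B`: for nonzero `f, g ∈ B`, if `fg ∈ A` then `f ∈ A` and
`g ∈ A`. -/
theorem stmt18 {k B : Type*} [Field k] [CharZero k] [CommRing B] [IsDomain B]
    [Algebra k B] (D : Derivation k B B)
    (hLND : ∀ b : B, ∃ n : ℕ, (⇑D)^[n] b = 0) :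
    ∀ f g : B, f ≠ 0 → g ≠ 0 → D (f * g) = 0 → D f = 0 ∧ D g = 0 := by
  have : CharZero B := charZero_of_injective_algebraMap (algebraMap k B).injective
  intro f g hf hg hfg
  obtain ⟨m, hm, hm'⟩ := Function.exists_iterate_ne_and_iterate_succ_eq hf (hLND f).choose_spec
  obtain ⟨n, hn, hn'⟩ := Function.exists_iterate_ne_and_iterate_succ_eq hg (hLND g).choose_spec
  have hmn : m + n = 0 := by
    by_contra! h
    refine D.iterate_add_mul_ne_zero hm hm' hn hn' (D.iterate_eq_zero_of_le (m := 1) ?_ (by omega))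
    simpa using hfg
  obtain ⟨rfl, rfl⟩ := Nat.add_eq_zero_iff.mp hmn
  exact ⟨hm', hn'⟩
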